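/- Let $\lambda, \mu$ be $\ell$-tuples of partitions with $|\lambda| = |\mu|$ and $s \in \mathbb{Z}^\ell$. Suppose $s_j$ is sufficiently small for $(\lambda; s)$, i.e. $s_i - s_j \ge |\lambda|$ for all $i \ne j$, and that $|\lambda| \ge 1$. If the multiset $\{\lambda^{(d)}_a + s_d\}$ dominates the multiset $\{\mu^{(d)}_a + s_d\}$ in the sense of partial sums of decreasing rearrangements, and $\mu^{(j)} = \emptyset$, then $\lambda^{(j)} = \emptyset$. -/

import Mathlib

/-- The number of nonzero parts of a partition presented as a function `ℕ → ℕ`. -/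
noncomputable def plen (f : ℕ → ℕ) : ℕ := sInf {N | ∀ a, N ≤ a → f a = 0}

/-- The size (number of boxes) of a partition presented as a function `ℕ → ℕ`. -/
noncomputable def psize (f : ℕ → ℕ) : ℕ := ∑ a ∈ Finset.range (plen f), f a

/-- Total size of an `ℓ`-tuple of partitions. -/
noncomputable def totalSize (ℓ : ℕ) (lam : Fin ℓ → ℕ → ℕ) : ℕ := ∑ d, psize (lam d)

/-- The multiset `{λ^{(d)}_a + s_d : 1 ≤ d ≤ ℓ, 1 ≤ a ≤ max(l(λ^{(d)}), l(μ^{(d)}))}`. -/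
noncomputable def tildeMS (ℓ : ℕ) (lam mu : Fin ℓ → ℕ → ℕ) (s : Fin ℓ → ℤ) : Multiset ℤ :=
  (Finset.univ : Finset (Fin ℓ)).val.bind fun d =>
    (Multiset.range (max (plen (lam d)) (plen (mu d)))).map fun a => (lam d a : ℤ) + s d

/-- Partial sum of the first `r` entries of the decreasing rearrangement of a multiset. -/
def descPartial (A : Multiset ℤ) (r : ℕ) : ℤ := (((A.sort (· ≤ ·)).reverse).take r).sum

/-- Dominance of multisets via partial sums of decreasing rearrangements. -/
def Dominates (A B : Multiset ℤ) : Prop := ∀ r : ℕ, descPartial B r ≤ descPartial A r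

/-!
If `λ^{(j)} ≠ ∅`, the two multisets have the same cardinality and the same sum, so dominance
at the sum of all but the last entry forces `min λ̃ ≤ min μ̃`. But `μ^{(j)} = ∅` puts `s_j` into
`μ̃`, while every entry of `λ̃` exceeds `s_j`: those from component `j` are `λ^{(j)}_a + s_j` with
`λ^{(j)}_a ≥ 1`, the others are at least `s_i ≥ s_j + |λ|`.
-/

lemma plen_spec {f : ℕ → ℕ} (hf : ∃ N, ∀ a, N ≤ a → f a = 0) :
    ∀ a, plen f ≤ a → f a = 0 :=
  Nat.sInf_mem hf

lemma plen_eq_zero {f : ℕ → ℕ} (hf : ∀ a, f a = 0) : plen f = 0 :=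
  Nat.sInf_eq_zero.mpr (Or.inl fun a _ => hf a)

lemma pos_of_lt_plen {f : ℕ → ℕ} (hf : Antitone f) {a : ℕ} (ha : a < plen f) : 0 < f a := by
  by_contra! hfa
  have htail : ∀ b, a ≤ b → f b = 0 := fun b hab => by have := hf hab; omega
  exact (Nat.sInf_le (show a ∈ {N | ∀ b, N ≤ b → f b = 0} from htail)).not_gt ha

lemma psize_eq_sum_range {f : ℕ → ℕ} (hf : ∃ N, ∀ a, N ≤ a → f a = 0) {c : ℕ}
    (hc : plen f ≤ c) : ∑ a ∈ Finset.range c, f a = psize f :=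
  (Finset.sum_subset (Finset.range_subset_range.mpr hc) fun a _ ha =>
    plen_spec hf a (by simpa using ha)).symm

lemma descPartial_card_sub_one {A : Multiset ℤ} (hA : A ≠ 0) :
    ∃ x ∈ A, (∀ y ∈ A, x ≤ y) ∧ descPartial A (Multiset.card A - 1) = A.sum - x := by
  obtain ⟨x, l, hxl⟩ : ∃ x l, A.sort (· ≤ ·) = x :: l :=
    List.exists_cons_of_ne_nil (by rwa [Ne, ← Multiset.coe_eq_zero, Multiset.sort_eq])
  have hA : ((x :: l : List ℤ) : Multiset ℤ) = A := hxl ▸ Multiset.sort_eq _ _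
  have hsorted : (x :: l).Pairwise (· ≤ ·) := hxl ▸ Multiset.pairwise_sort _ _
  subst hA
  refine ⟨x, by simp, fun y hy => ?_, ?_⟩
  · rcases List.mem_cons.mp (Multiset.mem_coe.mp hy) with rfl | hy
    exacts [le_rfl, List.rel_of_pairwise_cons hsorted hy]
  · rw [descPartial, hxl, List.reverse_cons, Multiset.coe_card, List.length_cons,
      Nat.add_sub_cancel, ← List.length_reverse, List.take_left]
    simp

lemma Dominates.exists_le_of_mem {A B : Multiset ℤ} (hdom : Dominates A B)
    (hcard : Multiset.card A = Multiset.card B) (hsum : A.sum = B.sum) {y : ℤ} (hy : y ∈ B) :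
    ∃ x ∈ A, x ≤ y := by
  have hB : B ≠ 0 := by rintro rfl; simp at hy
  have hA : A ≠ 0 := Multiset.card_pos.mp (hcard ▸ Multiset.card_pos.mpr hB)
  obtain ⟨x, hxA, -, hx⟩ := descPartial_card_sub_one hA
  obtain ⟨z, -, hzB, hz⟩ := descPartial_card_sub_one hB
  have := hdom (Multiset.card A - 1)
  rw [hx, hcard, hz] at this
  exact ⟨x, hxA, by linarith [hzB y hy]⟩

section tildeMS

variable {ℓ : ℕ} (lam mu : Fin ℓ → ℕ → ℕ) (s : Fin ℓ → ℤ)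

lemma mem_tildeMS {x : ℤ} :
    x ∈ tildeMS ℓ lam mu s ↔
      ∃ d a, a < max (plen (lam d)) (plen (mu d)) ∧ (lam d a : ℤ) + s d = x := by
  simp [tildeMS]

lemma card_tildeMS_comm :
    Multiset.card (tildeMS ℓ lam mu s) = Multiset.card (tildeMS ℓ mu lam s) := by
  simp [tildeMS, Multiset.card_bind, max_comm]

lemma sum_tildeMS (hlam : ∀ d, ∃ N, ∀ a, N ≤ a → lam d a = 0) :
    (tildeMS ℓ lam mu s).sum
      = totalSize ℓ lam + ∑ d, (max (plen (lam d)) (plen (mu d)) : ℤ) * s d := by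
  simp only [tildeMS, Multiset.sum_bind, totalSize, Nat.cast_sum, ← Finset.sum_add_distrib]
  refine Finset.sum_congr rfl fun d _ => ?_
  change ∑ a ∈ Finset.range _, ((lam d a : ℤ) + s d) = _
  rw [Finset.sum_add_distrib, Finset.sum_const, Finset.card_range, nsmul_eq_mul, ← Nat.cast_sum,
    psize_eq_sum_range (hlam d) (le_max_left _ _), Nat.cast_max]

end tildeMS

theorem stmt2_general (ℓ : ℕ) (lam mu : Fin ℓ → ℕ → ℕ)
    (hlam : ∀ d, Antitone (lam d))
    (hlam0 : ∀ d, ∃ N, ∀ a, N ≤ a → lam d a = 0)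
    (hmu0 : ∀ d, ∃ N, ∀ a, N ≤ a → mu d a = 0)
    (s : Fin ℓ → ℤ) (j : Fin ℓ)
    (hsize : totalSize ℓ lam = totalSize ℓ mu)
    (hpos : 1 ≤ totalSize ℓ lam)
    (hsmall : ∀ i, i ≠ j → (totalSize ℓ lam : ℤ) ≤ s i - s j)
    (hdom : Dominates (tildeMS ℓ lam mu s) (tildeMS ℓ mu lam s))
    (hmuj : ∀ a, mu j a = 0) :
    ∀ a, lam j a = 0 := by
  by_contra hne
  have hlen_mu : plen (mu j) = 0 := plen_eq_zero hmuj
  have hlen_lam : 0 < plen (lam j) := by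
    contrapose! hne
    exact fun a => plen_spec (hlam0 j) a (by omega)
  have hsB : s j ∈ tildeMS ℓ mu lam s :=
    (mem_tildeMS mu lam s).mpr ⟨j, 0, by omega, by simp [hmuj]⟩
  have hsum : (tildeMS ℓ lam mu s).sum = (tildeMS ℓ mu lam s).sum := by
    rw [sum_tildeMS _ _ _ hlam0, sum_tildeMS _ _ _ hmu0, hsize]
    simp only [max_comm]
  obtain ⟨x, hxA, hxs⟩ := hdom.exists_le_of_mem (card_tildeMS_comm lam mu s) hsum hsB
  obtain ⟨d, a, ha, rfl⟩ := (mem_tildeMS lam mu s).mp hxA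
  by_cases hd : d = j
  · subst hd
    have := pos_of_lt_plen (hlam d) (a := a) (by omega)
    omega
  · have := hsmall d hd
    omega

/-- If `s_j` is sufficiently small for `(λ; s)`, `|λ| = |μ| ≥ 1`, the multiset
`{λ^{(d)}_a + s_d}` dominates `{μ^{(d)}_a + s_d}`, and `μ^{(j)} = ∅`, then `λ^{(j)} = ∅`. -/
theorem stmt2 (ℓ : ℕ) (hℓ : 1 ≤ ℓ) (lam mu : Fin ℓ → ℕ → ℕ)
    (hlam : ∀ d, Antitone (lam d)) (hmu : ∀ d, Antitone (mu d))
    (hlam0 : ∀ d, ∃ N, ∀ a, N ≤ a → lam d a = 0)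
    (hmu0 : ∀ d, ∃ N, ∀ a, N ≤ a → mu d a = 0)
    (s : Fin ℓ → ℤ) (j : Fin ℓ)
    (hsize : totalSize ℓ lam = totalSize ℓ mu)
    (hpos : 1 ≤ totalSize ℓ lam)
    (hsmall : ∀ i, i ≠ j → (totalSize ℓ lam : ℤ) ≤ s i - s j)
    (hdom : Dominates (tildeMS ℓ lam mu s) (tildeMS ℓ mu lam s))
    (hmuj : ∀ a, mu j a = 0) :
    ∀ a, lam j a = 0 :=
  stmt2_general ℓ lam mu hlam hlam0 hmu0 s j hsize hpos hsmall hdom hmuj
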